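/- arXiv:1409.3107 — 2 statements merged into one kernel-verified Lean document; each statement's English description precedes it below -/
import Mathlib

section
/- For all real numbers α > 2, c > 0 and N > 0, the integral ∫₀^∞ 2πr·(1 − (1 + c·r^(−α))^(−N)) dr equals π·c^(2/α)·Γ(N + 2/α)·Γ(1 − 2/α) / Γ(N). -/
open MeasureTheory Real Set Filter Topology Asymptotics

/-!
With `q = 2/α ∈ (0, 1)`, the substitution `y = c r^(-α)` turns the integral into
`(2π/α) c^q ∫₀^∞ y^(-q-1) (1 - (1+y)^(-N)) dy`. Integrating by parts against
`y^(-q-1) = d/dy (-y^(-q)/q)` leaves `(N/q) ∫₀^∞ y^(-q) (1+y)^(-N-1) dy`; the boundary terms vanish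
because `1 - (1+y)^(-N)` is `O(y)` at `0` and bounded at `∞`. The last integral is the Beta
integral `B(1-q, N+q) = Γ(1-q) Γ(N+q) / (N Γ(N))`, moved from `(0, 1)` to `(0, ∞)` by
`t = y/(1+y)`.
-/

theorem integral_Ioo_rpow_mul_one_sub_rpow {a b : ℝ} (ha : 0 < a) (hb : 0 < b) :
    ∫ x in Ioo 0 1, x ^ (a - 1) * (1 - x) ^ (b - 1) = Gamma a * Gamma b / Gamma (a + b) := by
  have hbeta := Complex.betaIntegral_eq_Gamma_mul_div a b (by simpa) (by simpa)
  rw [Complex.betaIntegral, ← Complex.ofReal_add] at hbeta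
  simp only [Complex.Gamma_ofReal] at hbeta
  rw [← integral_Ioc_eq_integral_Ioo, ← intervalIntegral.integral_of_le zero_le_one]
  apply Complex.ofReal_injective
  rw [← intervalIntegral.integral_ofReal]
  push_cast
  rw [← hbeta]
  refine intervalIntegral.integral_congr fun x hx => ?_
  rw [uIcc_of_le zero_le_one] at hx
  simp only [Complex.ofReal_cpow hx.1, Complex.ofReal_cpow (sub_nonneg.2 hx.2)]
  push_cast
  rfl

theorem image_div_one_add_Ioi : (fun x : ℝ => x / (1 + x)) '' Ioi 0 = Ioo 0 1 := by
  ext t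
  constructor
  · rintro ⟨x, hx, rfl⟩
    have hx : (0 : ℝ) < x := hx
    exact ⟨by positivity, (div_lt_one (by positivity)).2 (by linarith)⟩
  · rintro ⟨ht0, ht1⟩
    refine ⟨t / (1 - t), div_pos ht0 (by linarith), ?_⟩
    have : 1 - t ≠ 0 := by linarith
    field_simp
    ring

theorem integral_Ioi_rpow_mul_one_add_rpow {a b : ℝ} (ha : 0 < a) (hb : 0 < b) :
    ∫ x in Ioi 0, x ^ (a - 1) * (1 + x) ^ (-(a + b)) = Gamma a * Gamma b / Gamma (a + b) := by
  have hderiv : ∀ x ∈ Ioi (0 : ℝ),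
      HasDerivWithinAt (fun x => x / (1 + x)) ((1 + x) ^ (-2 : ℝ)) (Ioi 0) x := by
    intro x (hx : 0 < x)
    have h := (hasDerivAt_id x).div ((hasDerivAt_id x).const_add 1) (by positivity)
    refine h.hasDerivWithinAt.congr_deriv ?_
    rw [rpow_neg (by positivity), rpow_two]
    simp only [id]
    field_simp
    ring
  have hinj : InjOn (fun x : ℝ => x / (1 + x)) (Ioi 0) := by
    intro x (hx : 0 < x) y (hy : 0 < y) h
    field_simp at h
    linarith
  rw [← integral_Ioo_rpow_mul_one_sub_rpow ha hb, ← image_div_one_add_Ioi,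
    integral_image_eq_integral_abs_deriv_smul measurableSet_Ioi hderiv hinj]
  refine setIntegral_congr_fun measurableSet_Ioi fun x (hx : 0 < x) => ?_
  have h1x : (0 : ℝ) < 1 + x := by positivity
  have hsub : 1 - x / (1 + x) = (1 + x)⁻¹ := by field_simp; ring
  rw [hsub, div_rpow hx.le h1x.le, inv_rpow h1x.le, abs_of_pos (by positivity), smul_eq_mul,
    ← rpow_neg h1x.le, div_eq_mul_inv, ← rpow_neg h1x.le]
  calc x ^ (a - 1) * (1 + x) ^ (-(a + b))
      = x ^ (a - 1) * ((1 + x) ^ (-2 : ℝ) * (1 + x) ^ (-(a - 1)) * (1 + x) ^ (-(b - 1))) := by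
        rw [← rpow_add h1x, ← rpow_add h1x]; ring_nf
    _ = _ := by ring

section OneSubOneAddRpowNeg

variable {N x : ℝ}

theorem one_sub_one_add_rpow_neg_nonneg (hN : 0 ≤ N) (hx : 0 ≤ x) :
    0 ≤ 1 - (1 + x) ^ (-N) :=
  sub_nonneg.2 (rpow_le_one_of_one_le_of_nonpos (by linarith) (by linarith))

theorem one_sub_one_add_rpow_neg_le_one (hx : 0 ≤ x) : 1 - (1 + x) ^ (-N) ≤ 1 :=
  sub_le_self _ (rpow_nonneg (by linarith) _)

theorem one_sub_one_add_rpow_neg_le_mul (hN : 0 ≤ N) (hx : 0 ≤ x) :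
    1 - (1 + x) ^ (-N) ≤ N * x := by
  have h1x : 0 < 1 + x := by linarith
  have hlog : log (1 + x) ≤ x := by linarith [log_le_sub_one_of_pos h1x]
  have hexp : 1 - N * log (1 + x) ≤ (1 + x) ^ (-N) := by
    rw [rpow_def_of_pos h1x]
    linarith [add_one_le_exp (log (1 + x) * -N)]
  nlinarith

theorem isBigO_one_sub_one_add_rpow_neg_nhdsGT (hN : 0 ≤ N) :
    (fun x : ℝ => 1 - (1 + x) ^ (-N)) =O[𝓝[>] 0] fun x => x := by
  refine IsBigO.of_bound N ?_
  filter_upwards [self_mem_nhdsWithin] with x (hx : 0 < x)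
  rw [norm_of_nonneg (one_sub_one_add_rpow_neg_nonneg hN hx.le), norm_of_nonneg hx.le]
  exact one_sub_one_add_rpow_neg_le_mul hN hx.le

theorem isBigO_one_sub_one_add_rpow_neg_atTop (hN : 0 ≤ N) :
    (fun x : ℝ => 1 - (1 + x) ^ (-N)) =O[atTop] fun _ => (1 : ℝ) := by
  refine IsBigO.of_bound 1 ?_
  filter_upwards [eventually_ge_atTop 0] with x hx
  rw [norm_of_nonneg (one_sub_one_add_rpow_neg_nonneg hN hx), norm_one, mul_one]
  exact one_sub_one_add_rpow_neg_le_one hx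

theorem isBigO_one_add_rpow_neg_atTop (hN : 0 ≤ N) :
    (fun x : ℝ => (1 + x) ^ (-N)) =O[atTop] fun x => x ^ (-N) := by
  refine IsBigO.of_bound 1 ?_
  filter_upwards [eventually_gt_atTop 0] with x hx
  rw [one_mul, norm_of_nonneg (rpow_nonneg (by linarith) _), norm_of_nonneg (rpow_nonneg hx.le _)]
  exact rpow_le_rpow_of_nonpos hx (by linarith) (by linarith)

theorem isBigO_one_add_rpow_neg_nhdsGT (hN : 0 ≤ N) :
    (fun x : ℝ => (1 + x) ^ (-N)) =O[𝓝[>] 0] fun _ => (1 : ℝ) := by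
  refine IsBigO.of_bound 1 ?_
  filter_upwards [self_mem_nhdsWithin] with x (hx : 0 < x)
  rw [norm_one, mul_one, norm_of_nonneg (rpow_nonneg (by linarith) _)]
  exact rpow_le_one_of_one_le_of_nonpos (by linarith) (by linarith)

end OneSubOneAddRpowNeg

theorem integrableOn_Ioi_rpow_mul_one_add_rpow {a b : ℝ} (ha : 0 < a) (hb : 0 < b) :
    IntegrableOn (fun x : ℝ => x ^ (a - 1) * (1 + x) ^ (-(a + b))) (Ioi 0) := by
  have hcont : ContinuousOn (fun x : ℝ => (1 + x) ^ (-(a + b))) (Ioi 0) :=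
    ContinuousOn.rpow_const (by fun_prop) fun x (hx : 0 < x) => Or.inl (by positivity)
  refine mellin_convergent_of_isBigO_scalar (b := 0)
    (hcont.locallyIntegrableOn measurableSet_Ioi) (isBigO_one_add_rpow_neg_atTop (by linarith))
    (by linarith) ((isBigO_one_add_rpow_neg_nhdsGT (by linarith)).congr_right fun x => ?_) ha
  simp

theorem integrableOn_Ioi_rpow_mul_one_sub_one_add_rpow_neg {q N : ℝ} (hq0 : 0 < q) (hq1 : q < 1)
    (hN : 0 ≤ N) : IntegrableOn (fun x : ℝ => x ^ (-q - 1) * (1 - (1 + x) ^ (-N))) (Ioi 0) := by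
  have hcont : ContinuousOn (fun x : ℝ => 1 - (1 + x) ^ (-N)) (Ioi 0) :=
    continuousOn_const.sub <|
      ContinuousOn.rpow_const (by fun_prop) fun x (hx : 0 < x) => Or.inl (by positivity)
  refine mellin_convergent_of_isBigO_scalar (hcont.locallyIntegrableOn measurableSet_Ioi)
    ((isBigO_one_sub_one_add_rpow_neg_atTop hN).congr_right fun x => ?_) (by linarith : -q < 0)
    ((isBigO_one_sub_one_add_rpow_neg_nhdsGT hN).congr_right fun x => ?_) (by linarith : -1 < -q)
  · simp
  · simp

theorem tendsto_rpow_neg_mul_self_nhdsGT_zero {q : ℝ} (hq : q < 1) :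
    Tendsto (fun x : ℝ => x ^ (-q) * x) (𝓝[>] 0) (𝓝 0) := by
  have h := (continuous_rpow_const (by linarith : 0 ≤ 1 - q)).tendsto 0
  rw [zero_rpow (by linarith)] at h
  refine (h.mono_left nhdsWithin_le_nhds).congr' ?_
  filter_upwards [self_mem_nhdsWithin] with x (hx : 0 < x)
  rw [sub_eq_neg_add, rpow_add hx, rpow_one]

theorem integral_Ioi_rpow_mul_one_sub_one_add_rpow_neg {q N : ℝ} (hq0 : 0 < q) (hq1 : q < 1)
    (hN : 0 < N) :
    ∫ x in Ioi 0, x ^ (-q - 1) * (1 - (1 + x) ^ (-N)) =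
      Gamma (1 - q) * Gamma (N + q) / (q * Gamma N) := by
  have hu : ∀ x ∈ Ioi (0 : ℝ), HasDerivAt (fun x => -q⁻¹ * x ^ (-q)) (x ^ (-q - 1)) x := by
    intro x (hx : 0 < x)
    refine ((hasDerivAt_rpow_const (Or.inl hx.ne')).const_mul _).congr_deriv ?_
    field_simp
  have hv : ∀ x ∈ Ioi (0 : ℝ),
      HasDerivAt (fun x => 1 - (1 + x) ^ (-N)) (N * (1 + x) ^ (-N - 1)) x := by
    intro x (hx : 0 < x)
    refine (((hasDerivAt_id x).const_add 1).rpow_const (Or.inl ?_)).const_sub 1 |>.congr_deriv ?_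
    · simp only [id]; linarith
    · simp
  have hbeta := integral_Ioi_rpow_mul_one_add_rpow (a := 1 - q) (b := N + q) (by linarith)
    (by linarith)
  have hbeta_int := integrableOn_Ioi_rpow_mul_one_add_rpow (a := 1 - q) (b := N + q) (by linarith)
    (by linarith)
  rw [show 1 - q - 1 = -q by ring, show -(1 - q + (N + q)) = -N - 1 by ring] at hbeta hbeta_int
  rw [show 1 - q + (N + q) = N + 1 by ring, Gamma_add_one hN.ne'] at hbeta
  have huv' : IntegrableOn (fun x => -q⁻¹ * x ^ (-q) * (N * (1 + x) ^ (-N - 1))) (Ioi 0) :=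
    IntegrableOn.congr_fun (hbeta_int.const_mul (-N / q)) (fun x _ => by ring) measurableSet_Ioi
  have hu_bigO (l : Filter ℝ) : (fun x : ℝ => -q⁻¹ * x ^ (-q)) =O[l] fun x => x ^ (-q) :=
    (isBigO_refl _ l).const_mul_left _
  have h_infty : Tendsto (fun x : ℝ => x ^ (-q) * 1) atTop (𝓝 0) := by
    simpa using tendsto_rpow_neg_atTop hq0
  have parts := integral_Ioi_mul_deriv_eq_deriv_mul hu hv huv'
    (integrableOn_Ioi_rpow_mul_one_sub_one_add_rpow_neg hq0 hq1 hN.le)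
    ((hu_bigO _ |>.mul (isBigO_one_sub_one_add_rpow_neg_nhdsGT hN.le)).trans_tendsto
      (tendsto_rpow_neg_mul_self_nhdsGT_zero hq1))
    ((hu_bigO _ |>.mul (isBigO_one_sub_one_add_rpow_neg_atTop hN.le)).trans_tendsto h_infty)
  have hlhs : ∫ x in Ioi 0, -q⁻¹ * x ^ (-q) * (N * (1 + x) ^ (-N - 1)) =
      -(N / q) * ∫ x in Ioi 0, x ^ (-q) * (1 + x) ^ (-N - 1) := by
    rw [← integral_const_mul]
    congr 1 with x
    ring
  rw [sub_zero, zero_sub, hlhs, hbeta, neg_mul, neg_inj] at parts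
  have hΓ : Gamma N ≠ 0 := (Gamma_pos_of_pos hN).ne'
  rw [← parts]
  field_simp

section Substitution

variable {E : Type*} [NormedAddCommGroup E] [NormedSpace ℝ E]

theorem integral_Ioi_rpow_smul_comp_rpow (f : ℝ → E) (s : ℝ) {p : ℝ} (hp : p ≠ 0) :
    ∫ x in Ioi 0, x ^ s • f (x ^ p) = |p|⁻¹ • ∫ y in Ioi 0, y ^ ((s + 1) / p - 1) • f y := by
  rw [← integral_comp_rpow_Ioi (fun y => y ^ ((s + 1) / p - 1) • f y) hp, ← integral_smul]
  refine setIntegral_congr_fun measurableSet_Ioi fun x (hx : 0 < x) => ?_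
  rw [smul_smul, smul_smul, ← rpow_mul hx.le, mul_sub, mul_div_cancel₀ _ hp, mul_one,
    inv_mul_cancel_left₀ (abs_pos.2 hp).ne', ← rpow_add hx]
  ring_nf

theorem integral_Ioi_rpow_smul_comp_mul_left (f : ℝ → E) (s : ℝ) {c : ℝ} (hc : 0 < c) :
    ∫ x in Ioi 0, x ^ s • f (c * x) = c ^ (-s - 1) • ∫ x in Ioi 0, x ^ s • f x := by
  have h := integral_comp_mul_left_Ioi (fun x => x ^ s • f x) 0 hc
  rw [mul_zero] at h
  rw [sub_eq_add_neg, rpow_add hc, rpow_neg_one, mul_smul, ← h, ← integral_smul]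
  refine setIntegral_congr_fun measurableSet_Ioi fun x (hx : 0 < x) => ?_
  rw [smul_smul, mul_rpow hc.le hx.le, ← mul_assoc, ← rpow_add hc, neg_add_cancel, rpow_zero,
    one_mul]

end Substitution

theorem stmt_0 (α c N : ℝ) (hα : 2 < α) (hc : 0 < c) (hN : 0 < N) :
    ∫ r in Set.Ioi (0:ℝ), 2 * π * r * (1 - (1 + c * r ^ (-α)) ^ (-N)) =
      π * c ^ (2/α) * Real.Gamma (N + 2/α) * Real.Gamma (1 - 2/α) / Real.Gamma N := by
  have hα0 : 0 < α := by linarith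
  have hq1 : 2 / α < 1 := (div_lt_one hα0).2 hα
  have hexp : (1 + 1) / -α - 1 = -(2 / α) - 1 := by ring
  calc ∫ r in Ioi 0, 2 * π * r * (1 - (1 + c * r ^ (-α)) ^ (-N))
      = 2 * π * ∫ r in Ioi 0, r ^ (1 : ℝ) • (1 - (1 + c * r ^ (-α)) ^ (-N)) := by
        rw [← integral_const_mul]
        congr 1 with r
        rw [rpow_one, smul_eq_mul, mul_assoc]
    _ = 2 * π * (α⁻¹ * (c ^ (2 / α) *
          ∫ y in Ioi 0, y ^ (-(2 / α) - 1) * (1 - (1 + y) ^ (-N)))) := by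
        rw [integral_Ioi_rpow_smul_comp_rpow (fun y => 1 - (1 + c * y) ^ (-N)) 1
            (neg_ne_zero.2 hα0.ne'),
          integral_Ioi_rpow_smul_comp_mul_left (fun y => 1 - (1 + y) ^ (-N)) _ hc, hexp, abs_neg,
          abs_of_pos hα0, neg_sub, sub_neg_eq_add, add_sub_cancel_left]
        rfl
    _ = _ := by
        rw [integral_Ioi_rpow_mul_one_sub_one_add_rpow_neg (by positivity) hq1 hN]
        have hΓ : Gamma N ≠ 0 := (Gamma_pos_of_pos hN).ne'
        field_simp
end

section
/- Let Z be a nonnegative real random variable on a probability space and c > 0 a real number such that E[exp(−s·Z)] = exp(−c·√s) for all s ≥ 0. Then for every z > 0, P(Z ≥ z) = erf(c/(2√z)). -/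
open MeasureTheory Real

/-- The error function `erf x = (2/√π) ∫₀ˣ exp(-u²) du`. -/
noncomputable def erf (x : ℝ) : ℝ := 2 / Real.sqrt π * ∫ u in (0:ℝ)..x, Real.exp (-u^2)

/-!
The variable `exp (-Z)` lives in `[0, 1]` and the hypothesis at `s = n` gives its moments
`exp (-c √n)`. Finite measures on a compact interval are determined by their moments (Weierstrass
approximation), so the law of `Z` is determined by these values. They are also the Laplace
transform of `W = c² / (4 G²)` with `G ~ N(0, 1/2)`: this is Glasser's identity
`∫ exp (-a / u² - u²) du = √π exp (-2 √a)`, which reduces to the Gaussian integral through the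
measure-preserving substitution `u ↦ u - √a / u`. Hence
`P(Z ≥ z) = P(|G| ≤ c / (2 √z)) = erf (c / (2 √z))`.
-/

open Set Polynomial ProbabilityTheory
open scoped NNReal ENNReal

theorem Continuous.integrable_of_ae_mem {X : Type*} [TopologicalSpace X] [MeasurableSpace X]
    [OpensMeasurableSpace X] [T2Space X] {μ : Measure X} [IsFiniteMeasure μ] {K : Set X}
    (hK : IsCompact K) (hμ : ∀ᵐ x ∂μ, x ∈ K) {f : X → ℝ} (hf : Continuous f) :
    Integrable f μ := by
  rw [← Measure.restrict_eq_self_of_ae_mem hμ]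
  exact hf.continuousOn.integrableOn_compact hK

namespace MeasureTheory

section Moments

variable {μ ν : Measure ℝ} [IsFiniteMeasure μ] [IsFiniteMeasure ν] {a b : ℝ}

theorem integral_eval_eq_of_moments_eq (hμ : ∀ᵐ x ∂μ, x ∈ Icc a b) (hν : ∀ᵐ x ∂ν, x ∈ Icc a b)
    (hmom : ∀ n : ℕ, ∫ x, x ^ n ∂μ = ∫ x, x ^ n ∂ν) (p : ℝ[X]) :
    ∫ x, p.eval x ∂μ = ∫ x, p.eval x ∂ν := by
  induction p using Polynomial.induction_on' with
  | add p q hp hq =>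
    have hint : ∀ ρ : Measure ℝ, IsFiniteMeasure ρ → (∀ᵐ x ∂ρ, x ∈ Icc a b) →
        ∀ r : ℝ[X], Integrable (fun x => r.eval x) ρ :=
      fun ρ _ hρ r => r.continuous.integrable_of_ae_mem isCompact_Icc hρ
    simp only [eval_add]
    rw [integral_add (hint μ ‹_› hμ p) (hint μ ‹_› hμ q), integral_add (hint ν ‹_› hν p)
      (hint ν ‹_› hν q), hp, hq]
  | monomial n c => simp only [eval_monomial, integral_const_mul, hmom]

theorem integral_eq_of_moments_eq (hμ : ∀ᵐ x ∂μ, x ∈ Icc a b) (hν : ∀ᵐ x ∂ν, x ∈ Icc a b)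
    (hmom : ∀ n : ℕ, ∫ x, x ^ n ∂μ = ∫ x, x ^ n ∂ν) {f : ℝ → ℝ} (hf : Continuous f) :
    ∫ x, f x ∂μ = ∫ x, f x ∂ν := by
  set M := μ.real univ + ν.real univ + 1
  have hM : 0 < M := by positivity
  apply eq_of_forall_dist_le
  intro ε hε
  obtain ⟨p, hp⟩ := exists_polynomial_near_of_continuousOn a b f hf.continuousOn (ε / M)
    (by positivity)
  have approx : ∀ ρ : Measure ℝ, IsFiniteMeasure ρ → (∀ᵐ x ∂ρ, x ∈ Icc a b) →
      dist (∫ x, p.eval x ∂ρ) (∫ x, f x ∂ρ) ≤ ε / M * ρ.real univ := by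
    intro ρ _ hρ
    rw [dist_eq_norm, ← integral_sub (p.continuous.integrable_of_ae_mem isCompact_Icc hρ)
      (hf.integrable_of_ae_mem isCompact_Icc hρ)]
    exact norm_integral_le_of_norm_le_const (hρ.mono fun x hx => (hp x hx).le)
  calc dist (∫ x, f x ∂μ) (∫ x, f x ∂ν)
      ≤ dist (∫ x, p.eval x ∂μ) (∫ x, f x ∂μ) + dist (∫ x, p.eval x ∂ν) (∫ x, f x ∂ν) := by
        rw [integral_eval_eq_of_moments_eq hμ hν hmom]
        exact dist_triangle_left _ _ _
    _ ≤ ε / M * μ.real univ + ε / M * ν.real univ :=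
        add_le_add (approx μ ‹_› hμ) (approx ν ‹_› hν)
    _ ≤ ε := by
        rw [← mul_add, div_mul_eq_mul_div, div_le_iff₀ hM]
        gcongr
        linarith

theorem Measure.ext_of_moments_eq (hμ : ∀ᵐ x ∂μ, x ∈ Icc a b) (hν : ∀ᵐ x ∂ν, x ∈ Icc a b)
    (hmom : ∀ n : ℕ, ∫ x, x ^ n ∂μ = ∫ x, x ^ n ∂ν) : μ = ν :=
  ext_of_forall_integral_eq_of_IsFiniteMeasure fun f =>
    integral_eq_of_moments_eq hμ hν hmom f.continuous

end Moments

theorem Measure.ext_of_integral_exp_neg_nat_mul_eq {μ ν : Measure ℝ} [IsFiniteMeasure μ]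
    [IsFiniteMeasure ν] (hμ : ∀ᵐ x ∂μ, 0 ≤ x) (hν : ∀ᵐ x ∂ν, 0 ≤ x)
    (h : ∀ n : ℕ, ∫ x, exp (-(n * x)) ∂μ = ∫ x, exp (-(n * x)) ∂ν) : μ = ν := by
  have hg : Measurable fun x : ℝ => exp (-x) := by fun_prop
  have supp : ∀ ρ : Measure ℝ, (∀ᵐ x ∂ρ, 0 ≤ x) → ∀ᵐ y ∂ρ.map (fun x => exp (-x)), y ∈ Icc 0 1 :=
    fun ρ hρ => (ae_map_iff hg.aemeasurable measurableSet_Icc).2 <| hρ.mono fun x hx =>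
      ⟨(exp_pos _).le, exp_le_one_iff.2 (neg_nonpos.2 hx)⟩
  have mom : ∀ (ρ : Measure ℝ) (n : ℕ),
      ∫ y, y ^ n ∂ρ.map (fun x => exp (-x)) = ∫ x, exp (-(n * x)) ∂ρ := fun ρ n => by
    rw [integral_map hg.aemeasurable (by fun_prop)]
    simp_rw [← exp_nat_mul, mul_neg]
  have hmap : μ.map (fun x => exp (-x)) = ν.map (fun x => exp (-x)) :=
    Measure.ext_of_moments_eq (supp μ hμ) (supp ν hν) fun n => by rw [mom, mom, h]
  have hinv : ∀ ρ : Measure ℝ, (ρ.map fun x => exp (-x)).map (fun y => -log y) = ρ := fun ρ => by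
    rw [Measure.map_map (by fun_prop) hg]
    simp [Function.comp_def]
  rw [← hinv μ, hmap, hinv]

end MeasureTheory

theorem aemeasurable_of_integral_exp_neg_ne_zero {Ω : Type*} [MeasurableSpace Ω] {μ : Measure Ω}
    {X : Ω → ℝ} (h : ∫ ω, exp (-X ω) ∂μ ≠ 0) : AEMeasurable X μ := by
  have hm : AEMeasurable (fun ω => -log (exp (-X ω))) μ :=
    measurable_log.neg.comp_aemeasurable (Integrable.of_integral_ne_zero h).aemeasurable
  simpa only [log_exp, neg_neg] using hm

theorem hasDerivAt_sub_div_self (k : ℝ) {x : ℝ} (hx : x ≠ 0) :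
    HasDerivAt (fun u : ℝ => u - k / u) (1 + k / x ^ 2) x := by
  have h := (hasDerivAt_id' x).fun_sub ((hasDerivAt_inv hx).const_mul k)
  simp only [← div_eq_mul_inv] at h
  exact h.congr_deriv (by ring)

theorem hasDerivAt_neg_div_self (k : ℝ) {x : ℝ} (hx : x ≠ 0) :
    HasDerivAt (fun u : ℝ => -k / u) (k / x ^ 2) x := by
  have h := (hasDerivAt_inv hx).const_mul (-k)
  simp only [← div_eq_mul_inv] at h
  exact h.congr_deriv (by ring)

theorem strictMonoOn_sub_div_self {k : ℝ} (hk : 0 ≤ k) :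
    StrictMonoOn (fun u : ℝ => u - k / u) (Ioi 0) := fun a ha b _ hab => by
  have : k / b ≤ k / a := div_le_div_of_nonneg_left hk ha hab.le
  simp only
  linarith

theorem image_sub_div_self_Ioi {k : ℝ} (hk : 0 < k) :
    (fun u : ℝ => u - k / u) '' Ioi 0 = univ := by
  refine eq_univ_of_forall fun w => ?_
  -- the positive root of `u² - w u - k = 0`
  set r := √(w ^ 2 + 4 * k)
  have hr : r ^ 2 = w ^ 2 + 4 * k := sq_sqrt (by positivity)
  have hwr : |w| < r := by
    rw [← sqrt_sq_eq_abs]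
    exact sqrt_lt_sqrt (sq_nonneg w) (by linarith)
  have hu : 0 < (w + r) / 2 := by linarith [neg_abs_le w]
  refine ⟨(w + r) / 2, hu, ?_⟩
  have : k / ((w + r) / 2) = (w + r) / 2 - w := by
    rw [div_eq_iff hu.ne']
    nlinarith
  simp only [this]
  ring

theorem image_neg_div_self_Ioi {k : ℝ} (hk : 0 < k) :
    (fun u : ℝ => -k / u) '' Ioi 0 = Iio 0 := by
  refine (image_subset_iff.2 fun u (hu : 0 < u) => ?_).antisymm fun w (hw : w < 0) => ?_
  · exact div_neg_of_neg_of_pos (neg_neg_of_pos hk) hu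
  · exact ⟨-k / w, div_pos_of_neg_of_neg (neg_neg_of_pos hk) hw, by field_simp⟩

theorem injOn_neg_div_self {k : ℝ} (hk : k ≠ 0) : InjOn (fun u : ℝ => -k / u) (Ioi 0) :=
  fun a (ha : 0 < a) b (hb : 0 < b) hab => by
    field_simp at hab
    linarith

/- The Cauchy–Schlömilch substitution: `φ u = u - k / u` maps `Ioi 0` onto `ℝ` with Jacobian
`1 + k / u²`, while `u ↦ -k / u` maps `Ioi 0` onto `Iio 0`, preserves `φ` and has Jacobian `k / u²`;
the two Jacobians differ by exactly `1`. -/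
theorem lintegral_comp_sub_div_self {k : ℝ} (hk : 0 ≤ k) {g : ℝ → ℝ≥0∞} (hg : Measurable g) :
    ∫⁻ u, g (u - k / u) = ∫⁻ u, g u := by
  rcases hk.eq_or_lt with rfl | hk
  · simp
  set φ : ℝ → ℝ := fun u => u - k / u
  have hφ : Measurable φ := by fun_prop
  have pos : ∫⁻ u, g u = ∫⁻ u in Ioi 0, ENNReal.ofReal (1 + k / u ^ 2) * g (φ u) := by
    rw [← setLIntegral_univ, ← image_sub_div_self_Ioi hk,
      lintegral_image_eq_lintegral_abs_deriv_mul measurableSet_Ioi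
        (fun x hx => (hasDerivAt_sub_div_self k (ne_of_gt hx)).hasDerivWithinAt)
        (strictMonoOn_sub_div_self hk.le).injOn]
    refine setLIntegral_congr_fun measurableSet_Ioi fun u _ => ?_
    rw [abs_of_pos (by positivity)]
  have neg : ∫⁻ u in Iio 0, g (φ u) = ∫⁻ u in Ioi 0, ENNReal.ofReal (k / u ^ 2) * g (φ u) := by
    rw [← image_neg_div_self_Ioi hk,
      lintegral_image_eq_lintegral_abs_deriv_mul measurableSet_Ioi
        (fun x hx => (hasDerivAt_neg_div_self k (ne_of_gt hx)).hasDerivWithinAt)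
        (injOn_neg_div_self hk.ne')]
    refine setLIntegral_congr_fun measurableSet_Ioi fun u (hu : 0 < u) => ?_
    have : φ (-k / u) = φ u := by simp only [φ]; field_simp; ring
    rw [abs_of_pos (by positivity), this]
  calc ∫⁻ u, g (φ u)
      = (∫⁻ u in Iio 0, g (φ u)) + ∫⁻ u in Ioi 0, g (φ u) := by
        rw [← setLIntegral_univ, ← Iio_union_Ici (a := (0 : ℝ)),
          lintegral_union measurableSet_Ici (Iio_disjoint_Ici le_rfl),
          restrict_Ioi_eq_restrict_Ici]
    _ = ∫⁻ u, g u := by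
        rw [neg, pos, ← lintegral_add_right _ (by fun_prop)]
        refine setLIntegral_congr_fun measurableSet_Ioi fun u (hu : 0 < u) => ?_
        rw [← add_one_mul, ENNReal.ofReal_add zero_le_one (by positivity), ENNReal.ofReal_one,
          add_comm]

theorem integral_comp_sub_div_self {k : ℝ} (hk : 0 ≤ k) {g : ℝ → ℝ} (hg : Measurable g)
    (hg0 : 0 ≤ g) : ∫ u, g (u - k / u) = ∫ u, g u := by
  rw [integral_eq_lintegral_of_nonneg_ae (ae_of_all _ hg0) hg.aestronglyMeasurable,
    integral_eq_lintegral_of_nonneg_ae (ae_of_all _ fun u => hg0 (u - k / u))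
      (hg.comp (by fun_prop)).aestronglyMeasurable,
    lintegral_comp_sub_div_self hk (g := fun w => ENNReal.ofReal (g w)) (by fun_prop)]

theorem integral_exp_neg_div_sq_sub_sq {a : ℝ} (ha : 0 ≤ a) :
    ∫ u, exp (-(a / u ^ 2) - u ^ 2) = √π * exp (-(2 * √a)) := by
  set k := √a
  have hsq : ∀ u : ℝ, u ≠ 0 →
      exp (-(a / u ^ 2) - u ^ 2) = exp (-(2 * k)) * exp (-(u - k / u) ^ 2) := by
    intro u hu
    rw [← exp_add, ← sq_sqrt ha]
    congr 1
    field_simp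
    ring
  calc ∫ u, exp (-(a / u ^ 2) - u ^ 2)
      = ∫ u, exp (-(2 * k)) * exp (-(u - k / u) ^ 2) :=
        integral_congr_ae ((Measure.ae_ne volume 0).mono hsq)
    _ = exp (-(2 * k)) * ∫ u, exp (-u ^ 2) := by
        rw [integral_const_mul, integral_comp_sub_div_self (sqrt_nonneg a)
          (g := fun w => exp (-w ^ 2)) (by fun_prop) fun w => (exp_pos _).le]
    _ = √π * exp (-(2 * k)) := by
        simpa [mul_comm] using congrArg (exp (-(2 * k)) * ·) (integral_gaussian 1)

theorem gaussianPDFReal_zero_inv_two (x : ℝ) : gaussianPDFReal 0 2⁻¹ x = exp (-x ^ 2) / √π := by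
  simp only [gaussianPDFReal, NNReal.coe_inv, NNReal.coe_ofNat, sub_zero]
  rw [show 2 * π * 2⁻¹ = π by ring, show (2 : ℝ) * 2⁻¹ = 1 by norm_num, div_one, div_eq_inv_mul]

theorem gaussianReal_real_Icc_neg_self {t : ℝ} (ht : 0 ≤ t) :
    (gaussianReal 0 2⁻¹).real (Icc (-t) t) = erf t := by
  have hint : ∀ a b : ℝ, IntervalIntegrable (fun u => exp (-u ^ 2)) volume a b :=
    fun a b => (by fun_prop : Continuous fun u : ℝ => exp (-u ^ 2)).intervalIntegrable a b
  have heven : ∫ u in -t..0, exp (-u ^ 2) = ∫ u in 0..t, exp (-u ^ 2) := by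
    have h := intervalIntegral.integral_comp_neg (a := 0) (b := t) fun u => exp (-u ^ 2)
    simp only [neg_sq, neg_zero] at h
    exact h.symm
  rw [measureReal_def, gaussianReal_apply_eq_integral _ (by norm_num),
    ENNReal.toReal_ofReal
      (setIntegral_nonneg measurableSet_Icc fun _ _ => gaussianPDFReal_nonneg _ _ _),
    integral_Icc_eq_integral_Ioc, ← intervalIntegral.integral_of_le (by linarith)]
  simp_rw [gaussianPDFReal_zero_inv_two]
  rw [intervalIntegral.integral_div, ← intervalIntegral.integral_add_adjacent_intervals (hint _ 0)
    (hint 0 _), heven, erf]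
  ring

/-- The Lévy distribution of scale `c² / 2`. -/
noncomputable def levyDistribution (c : ℝ) : Measure ℝ :=
  (gaussianReal 0 2⁻¹).map fun u => c ^ 2 / (4 * u ^ 2)

instance (c : ℝ) : IsProbabilityMeasure (levyDistribution c) :=
  Measure.isProbabilityMeasure_map (by fun_prop)

theorem ae_nonneg_levyDistribution (c : ℝ) : ∀ᵐ x ∂levyDistribution c, 0 ≤ x :=
  (ae_map_iff (by fun_prop) measurableSet_Ici).2 (ae_of_all _ fun u => by positivity)

theorem integral_exp_neg_mul_levyDistribution {c : ℝ} (hc : 0 ≤ c) {s : ℝ} (hs : 0 ≤ s) :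
    ∫ x, exp (-(s * x)) ∂levyDistribution c = exp (-(c * √s)) := by
  have hpt : ∀ u : ℝ, gaussianPDFReal 0 2⁻¹ u • exp (-(s * (c ^ 2 / (4 * u ^ 2))))
      = (√π)⁻¹ * exp (-(s * c ^ 2 / 4 / u ^ 2) - u ^ 2) := fun u => by
    rw [gaussianPDFReal_zero_inv_two, smul_eq_mul, div_eq_inv_mul, mul_assoc, ← exp_add]
    ring_nf
  have hroot : √(s * c ^ 2 / 4) = c * √s / 2 := by
    rw [show s * c ^ 2 / 4 = (c * √s / 2) ^ 2 by rw [div_pow, mul_pow, sq_sqrt hs]; ring]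
    exact sqrt_sq (by positivity)
  rw [levyDistribution, integral_map (by fun_prop) (by fun_prop),
    integral_gaussianReal_eq_integral_smul (by norm_num)]
  simp_rw [hpt]
  rw [integral_const_mul, integral_exp_neg_div_sq_sub_sq (by positivity), hroot,
    inv_mul_cancel_left₀ (by positivity)]
  ring_nf

theorem levyDistribution_real_Ici {c : ℝ} (hc : 0 ≤ c) {z : ℝ} (hz : 0 < z) :
    (levyDistribution c).real (Ici z) = erf (c / (2 * √z)) := by
  set t := c / (2 * √z)
  have ht : 0 ≤ t := by positivity
  have ht2 : t ^ 2 = c ^ 2 / (4 * z) := by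
    rw [div_pow, mul_pow, sq_sqrt hz.le]
    norm_num
  have hpre : (fun u => c ^ 2 / (4 * u ^ 2)) ⁻¹' Ici z = Icc (-t) t \ {0} := by
    ext u
    rcases eq_or_ne u 0 with rfl | hu
    · simp [hz.not_ge]
    have : z ≤ c ^ 2 / (4 * u ^ 2) ↔ u ^ 2 ≤ t ^ 2 := by
      rw [ht2, le_div_iff₀ (by positivity), le_div_iff₀ (by positivity)]
      constructor <;> intro h <;> linarith
    simp only [mem_preimage, mem_Ici, this, mem_sdiff, mem_Icc, mem_singleton_iff, hu,
      not_false_eq_true, and_true, sq_le_sq, abs_of_nonneg ht, abs_le]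
  rw [levyDistribution, map_measureReal_apply (by fun_prop) measurableSet_Ici, hpre,
    measureReal_sdiff_null (by
      rw [measureReal_eq_zero_iff]
      exact gaussianReal_absolutelyContinuous 0 (by norm_num) (measure_singleton 0)),
    gaussianReal_real_Icc_neg_self ht]

theorem stmt_3 {Ω : Type*} [MeasureSpace Ω]
    [IsProbabilityMeasure (volume : Measure Ω)]
    (Z : Ω → ℝ) (hZ : ∀ ω, 0 ≤ Z ω) (c : ℝ) (hc : 0 < c)
    (hL : ∀ s : ℝ, 0 ≤ s →
      (∫ ω, Real.exp (-(s * Z ω))) = Real.exp (-(c * Real.sqrt s))) :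
    ∀ z : ℝ, 0 < z → (volume {ω | z ≤ Z ω}).toReal = erf (c / (2 * Real.sqrt z)) := by
  intro z hz
  have hZm : AEMeasurable Z := aemeasurable_of_integral_exp_neg_ne_zero <| by
    simpa using (hL 1 zero_le_one).trans_ne (exp_pos _).ne'
  have := Measure.isProbabilityMeasure_map (μ := volume) hZm
  have hlaw : volume.map Z = levyDistribution c := by
    refine Measure.ext_of_integral_exp_neg_nat_mul_eq
      ((ae_map_iff hZm measurableSet_Ici).2 (ae_of_all _ hZ)) (ae_nonneg_levyDistribution c)
      fun n => ?_
    rw [integral_map hZm (by fun_prop), hL n n.cast_nonneg,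
      integral_exp_neg_mul_levyDistribution hc.le n.cast_nonneg]
  rw [← levyDistribution_real_Ici hc.le hz, ← hlaw, map_measureReal_apply_of_aemeasurable hZm
    measurableSet_Ici]
  rfl
end
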